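/- Let κ be a complex number with Im κ > 0 and let f : ℝ → ℂ be continuous and compactly supported. Then the volume potential u(x) = −∫_ℝ Φ_κ(x,y) f(y) dy, where Φ_κ(x,y) = (i/(2κ)) e^{i κ |x−y|}, is twice continuously differentiable on ℝ and satisfies u''(x) + κ² u(x) = f(x) for every x ∈ ℝ. -/

import Mathlib

/-!
Splitting the integral at `y = x` removes the absolute value:
`∫ e^{a|x-y|} f(y) dy = e^{ax} ∫_{y ≤ x} e^{-ay} f(y) dy
  + e^{-ax} ∫_{y > x} e^{ay} f(y) dy`,
and each half-line integral is differentiated by the fundamental theorem of calculus.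
The two boundary terms cancel in the first derivative and add up to `2 f(x)` in the second,
so `w(x) = ∫ e^{a|x-y|} f(y) dy` satisfies `w'' = a² w + 2a f`. With `a = iκ` and the
prefactor `-i/(2κ)` this is `u'' + κ² u = f`.
-/

open Complex MeasureTheory Set

section HalfLineIntegral

variable {E : Type*} [NormedAddCommGroup E] [NormedSpace ℝ E] [CompleteSpace E] {g : ℝ → E}

theorem hasDerivAt_setIntegral_Iic (hg : Continuous g) (hi : Integrable g) (x : ℝ) :
    HasDerivAt (fun t => ∫ y in Iic t, g y) (g x) x := by
  have hsplit : (fun t => ∫ y in Iic t, g y) =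
      fun t => (∫ y in Iic 0, g y) + ∫ y in (0 : ℝ)..t, g y := by
    funext t
    rw [← intervalIntegral.integral_Iic_sub_Iic hi.integrableOn hi.integrableOn,
      add_sub_cancel]
  rw [hsplit]
  exact (intervalIntegral.integral_hasDerivAt_right hi.intervalIntegrable
    (hg.stronglyMeasurableAtFilter volume _) hg.continuousAt).const_add _

theorem hasDerivAt_setIntegral_Ioi (hg : Continuous g) (hi : Integrable g) (x : ℝ) :
    HasDerivAt (fun t => ∫ y in Ioi t, g y) (-g x) x := by
  have hsplit : (fun t => ∫ y in Ioi t, g y) = fun t => (∫ y, g y) - ∫ y in Iic t, g y := by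
    funext t
    rw [← intervalIntegral.integral_Iic_add_Ioi hi.integrableOn hi.integrableOn,
      add_sub_cancel_left]
  rw [hsplit]
  exact (hasDerivAt_setIntegral_Iic hg hi x).const_sub _

end HalfLineIntegral

theorem contDiff_two_of_hasDerivAt {F : Type*} [NormedAddCommGroup F] [NormedSpace ℝ F]
    {u u' u'' : ℝ → F} (hu : ∀ x, HasDerivAt u (u' x) x)
    (hu' : ∀ x, HasDerivAt u' (u'' x) x) (hu'' : Continuous u'') : ContDiff ℝ 2 u := by
  have hderiv : deriv u = u' := funext fun x => (hu x).deriv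
  have hderiv' : deriv u' = u'' := funext fun x => (hu' x).deriv
  rw [show (2 : WithTop ℕ∞) = 1 + 1 by norm_num, contDiff_succ_iff_deriv, hderiv,
    contDiff_one_iff_deriv, hderiv']
  exact ⟨fun x => (hu x).differentiableAt, by simp, fun x => (hu' x).differentiableAt, hu''⟩

theorem hasDerivAt_cexp_mul_ofReal (a : ℂ) (x : ℝ) :
    HasDerivAt (fun t : ℝ => cexp (a * t)) (a * cexp (a * x)) x := by
  simpa [mul_comm] using ((hasDerivAt_id x).ofReal_comp.const_mul a).cexp

theorem cexp_mul_mul_cexp_neg_mul (a z : ℂ) : cexp (a * z) * cexp (-a * z) = 1 := by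
  rw [← Complex.exp_add, neg_mul, add_neg_cancel, Complex.exp_zero]

section ExpAbsConv

variable (a : ℂ) (f : ℝ → ℂ)

noncomputable def expAbsConv (x : ℝ) : ℂ := ∫ y, cexp (a * |x - y|) * f y

noncomputable def expAbsConvLeft (x : ℝ) : ℂ :=
  ∫ y in Iic x, cexp (-a * y) * f y

noncomputable def expAbsConvRight (x : ℝ) : ℂ :=
  ∫ y in Ioi x, cexp (a * y) * f y

/-- `∫ sign(x - y) e^{a|x-y|} f(y) dy`. -/
noncomputable def sgnExpAbsConv (x : ℝ) : ℂ :=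
  cexp (a * x) * expAbsConvLeft a f x - cexp (-a * x) * expAbsConvRight a f x

variable {f}

theorem integrable_cexp_mul_ofReal_mul (hf : Continuous f) (hsupp : HasCompactSupport f) :
    Integrable fun y : ℝ => cexp (a * y) * f y :=
  (by fun_prop : Continuous _).integrable_of_hasCompactSupport hsupp.mul_left

theorem expAbsConv_eq (hf : Continuous f) (hsupp : HasCompactSupport f) (x : ℝ) :
    expAbsConv a f x =
      cexp (a * x) * expAbsConvLeft a f x + cexp (-a * x) * expAbsConvRight a f x := by
  have hi : Integrable fun y : ℝ => cexp (a * |x - y|) * f y :=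
    (by fun_prop : Continuous _).integrable_of_hasCompactSupport hsupp.mul_left
  rw [expAbsConv, ← intervalIntegral.integral_Iic_add_Ioi hi.integrableOn hi.integrableOn,
    expAbsConvLeft, expAbsConvRight, ← integral_const_mul, ← integral_const_mul]
  congr 1
  · refine setIntegral_congr_fun measurableSet_Iic fun y (hy : y ≤ x) => ?_
    rw [abs_of_nonneg (sub_nonneg.2 hy), ← mul_assoc, ← Complex.exp_add]
    push_cast
    ring_nf
  · refine setIntegral_congr_fun measurableSet_Ioi fun y (hy : x < y) => ?_
    rw [abs_of_neg (sub_neg.2 hy), ← mul_assoc, ← Complex.exp_add]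
    push_cast
    ring_nf

theorem hasDerivAt_cexp_mul_expAbsConvLeft (hf : Continuous f) (hsupp : HasCompactSupport f)
    (x : ℝ) :
    HasDerivAt (fun t : ℝ => cexp (a * t) * expAbsConvLeft a f t)
      (a * (cexp (a * x) * expAbsConvLeft a f x) + f x) x := by
  refine ((hasDerivAt_cexp_mul_ofReal a x).fun_mul (hasDerivAt_setIntegral_Iic
    (by fun_prop) (integrable_cexp_mul_ofReal_mul (-a) hf hsupp) x)).congr_deriv ?_
  rw [expAbsConvLeft, ← mul_assoc, cexp_mul_mul_cexp_neg_mul, one_mul, mul_assoc]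

theorem hasDerivAt_cexp_mul_expAbsConvRight (hf : Continuous f) (hsupp : HasCompactSupport f)
    (x : ℝ) :
    HasDerivAt (fun t : ℝ => cexp (-a * t) * expAbsConvRight a f t)
      (-a * (cexp (-a * x) * expAbsConvRight a f x) - f x) x := by
  refine ((hasDerivAt_cexp_mul_ofReal (-a) x).fun_mul (hasDerivAt_setIntegral_Ioi
    (by fun_prop) (integrable_cexp_mul_ofReal_mul a hf hsupp) x)).congr_deriv ?_
  rw [expAbsConvRight, mul_neg, ← mul_assoc, mul_comm (cexp _), cexp_mul_mul_cexp_neg_mul,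
    one_mul, mul_assoc, sub_eq_add_neg]

theorem hasDerivAt_expAbsConv (hf : Continuous f) (hsupp : HasCompactSupport f) (x : ℝ) :
    HasDerivAt (expAbsConv a f) (a * sgnExpAbsConv a f x) x := by
  rw [funext (expAbsConv_eq a hf hsupp)]
  refine ((hasDerivAt_cexp_mul_expAbsConvLeft a hf hsupp x).fun_add
    (hasDerivAt_cexp_mul_expAbsConvRight a hf hsupp x)).congr_deriv ?_
  rw [sgnExpAbsConv]
  ring

theorem hasDerivAt_sgnExpAbsConv (hf : Continuous f) (hsupp : HasCompactSupport f) (x : ℝ) :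
    HasDerivAt (sgnExpAbsConv a f) (a * expAbsConv a f x + 2 * f x) x := by
  refine ((hasDerivAt_cexp_mul_expAbsConvLeft a hf hsupp x).fun_sub
    (hasDerivAt_cexp_mul_expAbsConvRight a hf hsupp x)).congr_deriv ?_
  rw [expAbsConv_eq a hf hsupp]
  ring

end ExpAbsConv

/-- For `κ` with `Im κ > 0` and `f : ℝ → ℂ` continuous with compact support, the volume
potential `u(x) = −∫ Φ_κ(x,y) f(y) dy`, `Φ_κ(x,y) = (i/(2κ)) e^{iκ|x−y|}`, is twice
continuously differentiable and satisfies `u'' + κ²u = f` on `ℝ`. -/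
theorem stmt_9 (κ : ℂ) (hκ : 0 < κ.im)
    (f : ℝ → ℂ) (hf : Continuous f) (hsupp : HasCompactSupport f)
    (Φ : ℝ → ℝ → ℂ)
    (hΦ : ∀ x y : ℝ, Φ x y = Complex.I / (2 * κ) * Complex.exp (Complex.I * κ * (|x - y| : ℝ)))
    (u : ℝ → ℂ) (hu : ∀ x : ℝ, u x = -∫ y : ℝ, Φ x y * f y) :
    ContDiff ℝ 2 u ∧ ∀ x : ℝ, deriv (deriv u) x + κ ^ 2 * u x = f x := by
  have hκ0 : κ ≠ 0 := by rintro rfl; simp at hκ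
  set c := I / (2 * κ)
  set a := I * κ
  have hu_eq : u = fun x => -c * expAbsConv a f x := by
    funext x
    simp only [hu, hΦ, expAbsConv, mul_assoc, integral_const_mul, neg_mul]
  have hu' (x : ℝ) : HasDerivAt u (-c * (a * sgnExpAbsConv a f x)) x := by
    rw [hu_eq]
    exact (hasDerivAt_expAbsConv a hf hsupp x).const_mul _
  have hu'' (x : ℝ) : HasDerivAt (fun x => -c * (a * sgnExpAbsConv a f x))
      (-c * (a * (a * expAbsConv a f x + 2 * f x))) x :=
    ((hasDerivAt_sgnExpAbsConv a hf hsupp x).const_mul _).const_mul _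
  have hconv : Continuous (expAbsConv a f) :=
    continuous_iff_continuousAt.2 fun x => (hasDerivAt_expAbsConv a hf hsupp x).continuousAt
  refine ⟨contDiff_two_of_hasDerivAt hu' hu'' (by fun_prop), fun x => ?_⟩
  rw [funext fun x => (hu' x).deriv, (hu'' x).deriv, hu_eq]
  have ha_sq : a ^ 2 = -κ ^ 2 := by rw [mul_pow, I_sq, neg_one_mul]
  have hca : -c * a * 2 = 1 := by
    simp only [c, a]
    field_simp
    rw [I_sq, neg_neg]
  linear_combination (-c * expAbsConv a f x) * ha_sq + f x * hca
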